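/- Let X_1, …, X_k, Y be finite-dimensional Banach spaces and T a nonzero smooth bounded k-linear map. Then for every bounded k-linear map A with T ⊥_B A, there exists x⃗₀ ∈ M_T (i.e., ‖T x⃗₀‖ = ‖T‖ with unit-sphere components) such that T x⃗₀ ⊥_B A x⃗₀ in Y. -/

import Mathlib

/-! If `T ⊥_B A`, take any `x₀` at which `T` attains its norm (compactness of the product of
unit spheres) and a norming functional `f` of `T x₀`. Then `S ↦ f (S x₀)` norms `T`, and smoothness
of `T` forces it to vanish on every `A` with `T ⊥_B A`: otherwise `A` and `c • T - A` (for the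
suitable `c ≠ 0` on which the functional vanishes) would both be orthogonal to `T`, hence so would
their sum `c • T`. So `f (A x₀) = 0`, and `f` witnesses `T x₀ ⊥_B A x₀`. -/

section BirkhoffJames

def BirkhoffJamesOrthogonal (𝕜 : Type*) {E : Type*} [NormedField 𝕜] [SeminormedAddCommGroup E]
    [NormedSpace 𝕜 E] (x y : E) : Prop :=
  ∀ lam : 𝕜, ‖x‖ ≤ ‖x + lam • y‖

def IsBirkhoffJamesSmooth (𝕜 : Type*) {E : Type*} [NormedField 𝕜] [SeminormedAddCommGroup E]
    [NormedSpace 𝕜 E] (x : E) : Prop :=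
  ∀ y₁ y₂ : E, BirkhoffJamesOrthogonal 𝕜 x y₁ → BirkhoffJamesOrthogonal 𝕜 x y₂ →
    BirkhoffJamesOrthogonal 𝕜 x (y₁ + y₂)

theorem not_birkhoffJamesOrthogonal_smul_self {𝕜 E : Type*} [NormedField 𝕜]
    [NormedAddCommGroup E] [NormedSpace 𝕜 E] {x : E} (hx : x ≠ 0) {μ : 𝕜} (hμ : μ ≠ 0) :
    ¬ BirkhoffJamesOrthogonal 𝕜 x (μ • x) := by
  intro h
  have := h (-μ⁻¹)
  rw [smul_smul, neg_mul, inv_mul_cancel₀ hμ, neg_one_smul, add_neg_cancel, norm_zero] at this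
  exact hx (norm_le_zero_iff.mp this)

variable {𝕜 E : Type*} [RCLike 𝕜] [NormedAddCommGroup E] [NormedSpace 𝕜 E]

theorem BirkhoffJamesOrthogonal.of_dual {g : E →ₗ[𝕜] 𝕜} (hg : ∀ z, ‖g z‖ ≤ ‖z‖) {x y : E}
    (hgx : g x = ‖x‖) (hgy : g y = 0) : BirkhoffJamesOrthogonal 𝕜 x y := fun lam =>
  calc ‖x‖ = ‖g (x + lam • y)‖ := by simp [hgx, hgy]
    _ ≤ ‖x + lam • y‖ := hg _

theorem IsBirkhoffJamesSmooth.dual_eq_zero {x : E} (hsmooth : IsBirkhoffJamesSmooth 𝕜 x)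
    (hx : x ≠ 0) {g : E →ₗ[𝕜] 𝕜} (hg : ∀ z, ‖g z‖ ≤ ‖z‖) (hgx : g x = ‖x‖) {y : E}
    (hxy : BirkhoffJamesOrthogonal 𝕜 x y) : g y = 0 := by
  by_contra hgy
  have hxnorm : (‖x‖ : 𝕜) ≠ 0 := by simpa using hx
  set μ : 𝕜 := g y / ‖x‖
  have hμ : μ ≠ 0 := div_ne_zero hgy hxnorm
  have hcompl : BirkhoffJamesOrthogonal 𝕜 x (μ • x - y) :=
    .of_dual hg hgx (by simp [μ, hgx, div_mul_cancel₀ _ hxnorm])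
  have hsum := hsmooth y _ hxy hcompl
  rw [add_sub_cancel] at hsum
  exact not_birkhoffJamesOrthogonal_smul_self hx hμ hsum

end BirkhoffJames

namespace ContinuousMultilinearMap

variable {𝕜 ι : Type*} [RCLike 𝕜] [Fintype ι] {X : ι → Type*}
  [∀ i, NormedAddCommGroup (X i)] [∀ i, NormedSpace 𝕜 (X i)]
  {Y : Type*} [NormedAddCommGroup Y] [NormedSpace 𝕜 Y]

theorem opNorm_le_of_unit_norm (f : ContinuousMultilinearMap 𝕜 X Y) {C : ℝ} (hC : 0 ≤ C)
    (h : ∀ u : ∀ i, X i, (∀ i, ‖u i‖ = 1) → ‖f u‖ ≤ C) : ‖f‖ ≤ C := by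
  refine (f.opNorm_le_iff hC).mpr fun m => ?_
  by_cases hm : ∃ i, m i = 0
  · obtain ⟨i, hi⟩ := hm
    rw [f.map_coord_zero i hi, norm_zero]
    positivity
  push Not at hm
  have hm' : ∀ i, (‖m i‖ : 𝕜) ≠ 0 := fun i => by simpa using hm i
  set u : ∀ i, X i := fun i => (‖m i‖ : 𝕜)⁻¹ • m i
  have hu : ∀ i, ‖u i‖ = 1 := fun i => by simp [u, norm_smul, hm i]
  have hmu : m = fun i => (‖m i‖ : 𝕜) • u i := by
    ext1 i
    simp [u, smul_smul, mul_inv_cancel₀ (hm' i)]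
  calc ‖f m‖ = (∏ i, ‖m i‖) * ‖f u‖ := by
        conv_lhs => rw [hmu, f.map_smul_univ]
        simp [norm_smul, norm_prod]
    _ ≤ (∏ i, ‖m i‖) * C := by gcongr; exact h u hu
    _ = C * ∏ i, ‖m i‖ := mul_comm _ _

theorem exists_unit_norm_apply_eq_opNorm [∀ i, FiniteDimensional 𝕜 (X i)]
    (f : ContinuousMultilinearMap 𝕜 X Y) (hf : f ≠ 0) :
    ∃ x : ∀ i, X i, (∀ i, ‖x i‖ = 1) ∧ ‖f x‖ = ‖f‖ := by
  have hnontriv : ∀ i, Nontrivial (X i) := fun i => by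
    by_contra h
    rw [not_nontrivial_iff_subsingleton] at h
    exact hf (ext fun m => f.map_coord_zero i (Subsingleton.elim _ _))
  have := fun i => FiniteDimensional.proper_rclike 𝕜 (X i)
  set K : Set (∀ i, X i) := Set.univ.pi fun i => Metric.sphere 0 1
  have hK : IsCompact K := isCompact_univ_pi fun i => isCompact_sphere 0 1
  have hKne : K.Nonempty := Set.univ_pi_nonempty_iff.mpr fun i =>
    Set.nonempty_coe_sort.mp (NormedSpace.sphere_nonempty_rclike 𝕜 zero_le_one)
  obtain ⟨x, hxK, hmax⟩ := hK.exists_isMaxOn hKne (map_continuous f).norm.continuousOn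
  have hx : ∀ i, ‖x i‖ = 1 := fun i => by simpa using hxK i (Set.mem_univ i)
  refine ⟨x, hx, le_antisymm ?_ ?_⟩
  · simpa [hx] using f.le_opNorm x
  · refine f.opNorm_le_of_unit_norm (norm_nonneg _) fun u hu => isMaxOn_iff.mp hmax u ?_
    simpa [K] using hu

end ContinuousMultilinearMap

theorem stmt18_general {𝕜 : Type*} [RCLike 𝕜] {k : ℕ} {X : Fin k → Type*}
    [∀ i, NormedAddCommGroup (X i)] [∀ i, NormedSpace 𝕜 (X i)]
    [∀ i, FiniteDimensional 𝕜 (X i)]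
    {Y : Type*} [NormedAddCommGroup Y] [NormedSpace 𝕜 Y]
    (T : ContinuousMultilinearMap 𝕜 X Y) (hT : T ≠ 0)
    (hsmooth : ∀ A₁ A₂ : ContinuousMultilinearMap 𝕜 X Y,
      (∀ lam : 𝕜, ‖T‖ ≤ ‖T + lam • A₁‖) → (∀ lam : 𝕜, ‖T‖ ≤ ‖T + lam • A₂‖) →
      (∀ lam : 𝕜, ‖T‖ ≤ ‖T + lam • (A₁ + A₂)‖)) :
    ∀ A : ContinuousMultilinearMap 𝕜 X Y, (∀ lam : 𝕜, ‖T‖ ≤ ‖T + lam • A‖) →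
      ∃ x₀ : ∀ i, X i, (∀ i, ‖x₀ i‖ = 1) ∧ ‖T x₀‖ = ‖T‖ ∧
        (∀ lam : 𝕜, ‖T x₀‖ ≤ ‖T x₀ + lam • A x₀‖) := by
  intro A hA
  obtain ⟨x₀, hx₀, hTx₀⟩ := T.exists_unit_norm_apply_eq_opNorm hT
  obtain ⟨f, hf, hfT⟩ := exists_dual_vector'' 𝕜 (T x₀)
  have hf_le : ∀ y, ‖f y‖ ≤ ‖y‖ := fun y =>
    (f.le_opNorm y).trans (mul_le_of_le_one_left (norm_nonneg _) hf)
  have hfA : f (A x₀) = 0 := by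
    refine IsBirkhoffJamesSmooth.dual_eq_zero hsmooth hT
      (g := (f.comp (ContinuousMultilinearMap.apply 𝕜 X Y x₀) : _ →ₗ[𝕜] 𝕜)) (fun S => ?_)
      (by simp [hfT, hTx₀]) hA
    simpa [hx₀] using (hf_le (S x₀)).trans (S.le_opNorm x₀)
  exact ⟨x₀, hx₀, hTx₀, BirkhoffJamesOrthogonal.of_dual (g := f) hf_le hfT hfA⟩

theorem stmt18 {𝕜 : Type*} [RCLike 𝕜] {k : ℕ} {X : Fin k → Type*}
    [∀ i, NormedAddCommGroup (X i)] [∀ i, NormedSpace 𝕜 (X i)]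
    [∀ i, FiniteDimensional 𝕜 (X i)]
    {Y : Type*} [NormedAddCommGroup Y] [NormedSpace 𝕜 Y] [FiniteDimensional 𝕜 Y]
    (T : ContinuousMultilinearMap 𝕜 X Y) (hT : T ≠ 0)
    (hsmooth : ∀ A₁ A₂ : ContinuousMultilinearMap 𝕜 X Y,
      (∀ lam : 𝕜, ‖T‖ ≤ ‖T + lam • A₁‖) → (∀ lam : 𝕜, ‖T‖ ≤ ‖T + lam • A₂‖) →
      (∀ lam : 𝕜, ‖T‖ ≤ ‖T + lam • (A₁ + A₂)‖)) :
    ∀ A : ContinuousMultilinearMap 𝕜 X Y, (∀ lam : 𝕜, ‖T‖ ≤ ‖T + lam • A‖) →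
      ∃ x₀ : ∀ i, X i, (∀ i, ‖x₀ i‖ = 1) ∧ ‖T x₀‖ = ‖T‖ ∧
        (∀ lam : 𝕜, ‖T x₀‖ ≤ ‖T x₀ + lam • A x₀‖) :=
  stmt18_general T hT hsmooth
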